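/- Let G = (V, w) be an n-vertex weighted graph. Then λ(G)-cut-rank(G) ≤ mincut-cert(G) ≤ λ(G)-cut-rank(G) + 1. -/

import Mathlib

open Finset Matrix

/-- The set of edge slots: 2-element subsets of the vertex set `Fin n`. -/
abbrev EdgeSlot (n : ℕ) := {e : Finset (Fin n) // e.card = 2}

/-- Weight of the cut with shore `S`: sum of weights of edge slots with exactly
one endpoint in `S`. -/
noncomputable def cutWeight (n : ℕ) (w : EdgeSlot n → ℝ) (S : Finset (Fin n)) : ℝ :=
  ∑ e : EdgeSlot n, if (e.1 ∩ S).card = 1 then w e else 0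

/-- `λ(G)`: the minimum cut weight over all shores `∅ ≠ S ⊊ V`. -/
noncomputable def minCutVal (n : ℕ) (w : EdgeSlot n → ℝ) : ℝ :=
  sInf {x : ℝ | ∃ S : Finset (Fin n), S.Nonempty ∧ S ≠ Finset.univ ∧ cutWeight n w S = x}

/-- The at-least-τ linear-query certificate complexity: the least `k` such that some
`k`-row query matrix `A` certifies that every nonnegative `w'` consistent with the
answers on `w` has minimum cut value at least `τ`. -/
noncomputable def atLeastCert (n : ℕ) (τ : ℝ) (w : EdgeSlot n → ℝ) : ℕ :=
  sInf {k : ℕ | ∃ A : Matrix (Fin k) (EdgeSlot n) ℝ,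
    ∀ w' : EdgeSlot n → ℝ, (∀ e, 0 ≤ w' e) → A.mulVec w = A.mulVec w' →
      τ ≤ minCutVal n w'}

/-- The minimum-cut linear-query certificate complexity. -/
noncomputable def mincutCert (n : ℕ) (w : EdgeSlot n → ℝ) : ℕ :=
  sInf {k : ℕ | ∃ A : Matrix (Fin k) (EdgeSlot n) ℝ,
    ∀ w' : EdgeSlot n → ℝ, (∀ e, 0 ≤ w' e) → A.mulVec w = A.mulVec w' →
      minCutVal n w' = minCutVal n w}

/-- The connectivity linear-query certificate complexity. -/
noncomputable def conCert (n : ℕ) (w : EdgeSlot n → ℝ) : ℕ :=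
  sInf {k : ℕ | ∃ A : Matrix (Fin k) (EdgeSlot n) ℝ,
    ∀ w' : EdgeSlot n → ℝ, (∀ e, 0 ≤ w' e) → A.mulVec w = A.mulVec w' →
      (0 < minCutVal n w' ↔ 0 < minCutVal n w)}

/-- Row indices of the universal cut-edge incidence matrix: nonempty sets of
vertices not containing vertex `1` (represented as `0 : Fin n`). -/
abbrev Shore (n : ℕ) [NeZero n] := {S : Finset (Fin n) // S.Nonempty ∧ (0 : Fin n) ∉ S}

/-- The universal cut-edge incidence matrix `M_n`. -/
noncomputable def Mn (n : ℕ) [NeZero n] : Matrix (Shore n) (EdgeSlot n) ℝ :=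
  fun S e => if (e.1 ∩ S.1).card = 1 then 1 else 0

/-- `τ`-cut-rank of a graph: the minimum rank of a matrix `X ≤ M_n` (entrywise)
with every entry of `Xw` at least `τ`. -/
noncomputable def cutRank (n : ℕ) [NeZero n] (τ : ℝ) (w : EdgeSlot n → ℝ) : ℕ :=
  sInf {r : ℕ | ∃ X : Matrix (Shore n) (EdgeSlot n) ℝ,
    (∀ S e, X S e ≤ Mn n S e) ∧ (∀ S, τ ≤ X.mulVec w S) ∧ X.rank = r}

/-- The weight vector of the `n`-cycle with unit weights. -/
noncomputable def cycleWeight (n : ℕ) [NeZero n] : EdgeSlot n → ℝ :=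
  fun e => if ∃ i : Fin n, e.1 = {i, i + 1} then 1 else 0

/-!
A query matrix `A` certifies `λ(G)` only if, for every shore `S`, the linear program
`min {M_S · w' : A w' = A w, w' ≥ 0}` has value at least `λ`. By LP duality (Farkas' lemma) there is
then `y_S` with `y_Sᵀ A ≤ M_S` and `y_S · A w ≥ λ`, and the rows `y_Sᵀ A` form a matrix `X ≤ M_n`
of rank at most `rank A` with `X w ≥ λ`.

Conversely, take `X` optimal for the cut-rank and query a basis of its row space together with the
indicator of one minimum cut. A nonnegative `w'` giving the same answers has
`M_S w' ≥ X_S w' = X_S w ≥ λ` for every shore `S`, while the queried cut still has weight `λ`.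
-/

section ConeHull

variable {κ F : Type*} [Fintype κ] [AddCommGroup F] [Module ℝ F]

theorem exists_nonneg_sum_smul_eq_of_not_linearIndependent {v : κ → F}
    (hv : ¬LinearIndependent ℝ v) {c : κ → ℝ} (hc : 0 ≤ c) :
    ∃ d : κ → ℝ, 0 ≤ d ∧ (∃ i, d i = 0) ∧ ∑ j, d j • v j = ∑ j, c j • v j := by
  classical
  obtain ⟨g, hg, i₀, hi₀⟩ := Fintype.not_linearIndependent_iff.mp hv
  obtain ⟨f, hf, i₁, hi₁⟩ : ∃ f : κ → ℝ, ∑ j, f j • v j = 0 ∧ ∃ i, 0 < f i := by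
    rcases lt_or_gt_of_ne hi₀ with h | h
    · exact ⟨-g, by simp [neg_smul, hg], i₀, by simpa using h⟩
    · exact ⟨g, hg, i₀, h⟩
  -- move from `c` along `-f` until the first coefficient vanishes
  obtain ⟨i, hi, hmin⟩ := ((univ : Finset κ).filter fun j => 0 < f j).exists_min_image
    (fun j => c j / f j) ⟨i₁, by simpa using hi₁⟩
  have hfi : 0 < f i := (mem_filter.mp hi).2
  refine ⟨c - (c i / f i) • f, fun j => ?_, ⟨i, by simp [div_mul_cancel₀ _ hfi.ne']⟩, ?_⟩
  · have hcj : 0 ≤ c j := hc j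
    simp only [Pi.sub_apply, Pi.smul_apply, smul_eq_mul, Pi.zero_apply, sub_nonneg]
    by_cases hfj : 0 < f j
    · rw [← le_div_iff₀ hfj]
      exact hmin j (by simpa using hfj)
    · exact (mul_nonpos_of_nonneg_of_nonpos (div_nonneg (hc i) hfi.le) (not_lt.mp hfj)).trans hcj
  · simp [sub_smul, Finset.sum_sub_distrib, mul_smul, ← Finset.smul_sum, hf]

namespace PointedCone

theorem mem_hull_range_iff {v : κ → F} {x : F} :
    x ∈ hull ℝ (Set.range v) ↔ ∃ c : κ → ℝ, 0 ≤ c ∧ ∑ j, c j • v j = x := by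
  rw [Submodule.mem_span_range_iff_exists_fun]
  constructor
  · rintro ⟨c, rfl⟩
    exact ⟨fun j => c j, fun j => (c j).2, by simp⟩
  · rintro ⟨c, hc, rfl⟩
    exact ⟨fun j => ⟨c j, hc j⟩, by simp⟩

theorem coe_hull_range_eq_iUnion_of_not_linearIndependent [DecidableEq κ] {v : κ → F}
    (hv : ¬LinearIndependent ℝ v) :
    (hull ℝ (Set.range v) : Set F) =
      ⋃ i, (hull ℝ (Set.range fun j : {j // j ≠ i} => v j.1) : Set F) := by
  refine Set.Subset.antisymm (fun x hx => ?_) <|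
    Set.iUnion_subset fun i => Submodule.span_mono (Set.range_subset_iff.mpr fun j => ⟨j, rfl⟩)
  obtain ⟨c, hc, rfl⟩ := mem_hull_range_iff.mp hx
  obtain ⟨d, hd, ⟨i, hi⟩, hdc⟩ := exists_nonneg_sum_smul_eq_of_not_linearIndependent hv hc
  refine Set.mem_iUnion.mpr ⟨i, mem_hull_range_iff.mpr ⟨fun j => d j, fun j => hd j, ?_⟩⟩
  rw [← hdc, Fintype.sum_eq_add_sum_subtype_ne _ i, hi, zero_smul, zero_add]

variable [TopologicalSpace F] [IsTopologicalAddGroup F] [ContinuousSMul ℝ F] [T2Space F]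

theorem isClosed_hull_range (v : κ → F) : IsClosed (hull ℝ (Set.range v) : Set F) := by
  classical
  induction h : Fintype.card κ using Nat.strong_induction_on generalizing κ with
  | _ N ih =>
  by_cases hv : LinearIndependent ℝ v
  · have himage : (hull ℝ (Set.range v) : Set F) = Fintype.linearCombination ℝ v '' Set.Ici 0 := by
      ext x
      simp [mem_hull_range_iff, Fintype.linearCombination_apply]
    rw [himage]
    refine (LinearMap.isClosedEmbedding_of_injective ?_).isClosedMap _ isClosed_Ici
    exact LinearMap.ker_eq_bot.mpr (linearIndependent_iff_injective_fintypeLinearCombination.mp hv)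
  · rw [coe_hull_range_eq_iUnion_of_not_linearIndependent hv]
    exact isClosed_iUnion_of_finite fun i =>
      ih _ (h ▸ Fintype.card_subtype_lt (p := (· ≠ i)) (x := i) (by simp)) _ rfl

theorem mem_hull_range_of_forall_nonneg [LocallyConvexSpace ℝ F] (v : κ → F) {b : F}
    (h : ∀ f : StrongDual ℝ F, (∀ j, 0 ≤ f (v j)) → 0 ≤ f b) : b ∈ hull ℝ (Set.range v) := by
  let C : ProperCone ℝ F := ⟨hull ℝ (Set.range v), isClosed_hull_range v⟩
  by_contra hb
  obtain ⟨f, hfC, hfb⟩ := C.hyperplane_separation_point (x₀ := b) hb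
  exact hfb.not_ge (h f fun j => hfC _ (subset_hull ⟨j, rfl⟩))

end PointedCone

end ConeHull

section Farkas

variable {κ ι m : Type*} [Fintype κ] [Fintype ι]

theorem Matrix.exists_nonneg_vecMul_eq_of_forall [DecidableEq ι] (G : Matrix κ ι ℝ) (b : ι → ℝ)
    (h : ∀ y, 0 ≤ G *ᵥ y → 0 ≤ b ⬝ᵥ y) : ∃ c, 0 ≤ c ∧ c ᵥ* G = b := by
  have hdual (f : StrongDual ℝ (ι → ℝ)) (u : ι → ℝ) : f u = u ⬝ᵥ fun i => f (Pi.single i 1) := by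
    conv_lhs => rw [← Finset.univ_sum_single u]
    simp only [map_sum, dotProduct]
    refine Finset.sum_congr rfl fun i _ => ?_
    rw [← smul_eq_mul, ← map_smul, ← Pi.single_smul', smul_eq_mul, mul_one]
  obtain ⟨c, hc, hcb⟩ := PointedCone.mem_hull_range_iff.mp <|
    PointedCone.mem_hull_range_of_forall_nonneg (fun k => G k) (b := b) fun f hf => by
      rw [hdual]
      exact h _ fun k => by have := hf k; rwa [hdual] at this
  exact ⟨c, hc, by rw [vecMul_eq_sum, hcb]⟩

theorem Matrix.mul_le_dotProduct_of_mulVec_eq_smul {A : Matrix m ι ℝ} {b : m → ℝ} {c : ι → ℝ}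
    (hc : 0 ≤ c) {t : ℝ} (h : ∀ x, 0 ≤ x → A *ᵥ x = b → t ≤ c ⬝ᵥ x) {x : ι → ℝ} {μ : ℝ}
    (hx : 0 ≤ x) (hμ : 0 ≤ μ) (hAx : A *ᵥ x = μ • b) : μ * t ≤ c ⬝ᵥ x := by
  rcases hμ.eq_or_lt with rfl | hμ
  · simpa using dotProduct_nonneg_of_nonneg hc hx
  · have := h (μ⁻¹ • x) (smul_nonneg (inv_nonneg.mpr hμ.le) hx)
      (by rw [mulVec_smul, hAx, smul_smul, inv_mul_cancel₀ hμ.ne', one_smul])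
    rwa [dotProduct_smul, smul_eq_mul, le_inv_mul_iff₀ hμ] at this

theorem Matrix.exists_vecMul_le_and_le_dotProduct [DecidableEq ι] [Fintype m] (A : Matrix m ι ℝ)
    (b : m → ℝ) {c : ι → ℝ} (hc : 0 ≤ c) {t : ℝ} (h : ∀ x, 0 ≤ x → A *ᵥ x = b → t ≤ c ⬝ᵥ x) :
    ∃ y, y ᵥ* A ≤ c ∧ t ≤ y ⬝ᵥ b := by
  -- `(c, -t)` is a nonnegative combination of the rows of `±[A | -b]` and of the unit vectors
  set B : Matrix m (ι ⊕ Unit) ℝ := fromCols A (replicateCol Unit (-b))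
  have hB (x : ι → ℝ) (μ : ℝ) : B *ᵥ Sum.elim x (fun _ => μ) = A *ᵥ x - μ • b := by
    ext i; simp [B, mulVec, dotProduct, sub_eq_add_neg, mul_comm]
  have hB' (y : m → ℝ) : y ᵥ* B = Sum.elim (y ᵥ* A) (fun _ => -(y ⬝ᵥ b)) := by
    ext (e | _) <;> simp [B, vecMul, dotProduct, mul_comm]
  obtain ⟨C, hC, hCG⟩ := exists_nonneg_vecMul_eq_of_forall (fromRows (fromRows B (-B)) 1)
    (Sum.elim c fun _ => -t) fun z hz => by
      obtain ⟨x, μ, rfl⟩ : ∃ (x : ι → ℝ) (μ : ℝ), z = Sum.elim x fun _ => μ :=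
        ⟨z ∘ Sum.inl, z (Sum.inr ()), by ext (_ | _) <;> rfl⟩
      rw [fromRows_mulVec, fromRows_mulVec, neg_mulVec, one_mulVec] at hz
      have hAx : A *ᵥ x = μ • b := by
        rw [← sub_eq_zero, ← hB]
        exact le_antisymm (fun i => by simpa using hz (Sum.inl (Sum.inr i)))
          fun i => hz (Sum.inl (Sum.inl i))
      have := mul_le_dotProduct_of_mulVec_eq_smul hc h
        (fun e => by simpa using hz (Sum.inr (Sum.inl e)))
        (by simpa using hz (Sum.inr (Sum.inr ()))) hAx
      have hUnit : (fun _ : Unit => -t) ⬝ᵥ (fun _ => μ) = -(μ * t) := by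
        simp [dotProduct, mul_comm]
      rw [sumElim_dotProduct_sumElim, hUnit]
      linarith
  set y := C ∘ Sum.inl ∘ Sum.inl - C ∘ Sum.inl ∘ Sum.inr
  have hy : Sum.elim (y ᵥ* A) (fun _ => -(y ⬝ᵥ b)) + C ∘ Sum.inr = Sum.elim c fun _ => -t := by
    rw [← hB', ← hCG, sub_vecMul, vecMul_fromRows, vecMul_fromRows, vecMul_neg, vecMul_one,
      sub_eq_add_neg]
    rfl
  refine ⟨y, fun e => ?_, ?_⟩
  · have he := congrFun hy (Sum.inl e)
    simp only [Pi.add_apply, Sum.elim_inl, Function.comp_apply] at he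
    exact he ▸ le_add_of_nonneg_right (hC _)
  · have hunit := congrFun hy (Sum.inr ())
    simp only [Pi.add_apply, Sum.elim_inr, Function.comp_apply] at hunit
    exact neg_le_neg_iff.mp (hunit ▸ le_add_of_nonneg_right (hC _))

end Farkas

section Cuts

variable {n : ℕ}

def cutIndicator (S : Finset (Fin n)) : EdgeSlot n → ℝ :=
  fun e => if (e.1 ∩ S).card = 1 then 1 else 0

theorem cutIndicator_nonneg (S : Finset (Fin n)) : 0 ≤ cutIndicator S :=
  fun e => by unfold cutIndicator; split_ifs <;> norm_num

theorem cutIndicator_dotProduct (S : Finset (Fin n)) (w : EdgeSlot n → ℝ) :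
    cutIndicator S ⬝ᵥ w = cutWeight n w S := by
  simp [cutIndicator, cutWeight, dotProduct, ite_mul]

theorem cutIndicator_compl (S : Finset (Fin n)) : cutIndicator Sᶜ = cutIndicator S := by
  ext e
  have hsplit := Finset.card_sdiff_add_card_inter e.1 S
  rw [e.2] at hsplit
  simp only [cutIndicator, ← Finset.sdiff_eq_inter_compl]
  exact if_congr (by omega) rfl rfl

def cutValues (n : ℕ) (w : EdgeSlot n → ℝ) : Set ℝ :=
  {x : ℝ | ∃ S : Finset (Fin n), S.Nonempty ∧ S ≠ univ ∧ cutWeight n w S = x}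

theorem minCutVal_eq_sInf (w : EdgeSlot n → ℝ) : minCutVal n w = sInf (cutValues n w) := rfl

theorem finite_cutValues (w : EdgeSlot n → ℝ) : (cutValues n w).Finite :=
  (Set.finite_range fun S => cutWeight n w S).subset fun _ ⟨S, _, _, hS⟩ => ⟨S, hS⟩

theorem minCutVal_le_cutWeight (w : EdgeSlot n → ℝ) {S : Finset (Fin n)} (hS : S.Nonempty)
    (hS' : S ≠ univ) : minCutVal n w ≤ cutWeight n w S := by
  rw [minCutVal_eq_sInf]
  exact csInf_le (finite_cutValues w).bddBelow ⟨S, hS, hS', rfl⟩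

theorem minCutVal_mem_cutValues (hn : 2 ≤ n) (w : EdgeSlot n → ℝ) :
    minCutVal n w ∈ cutValues n w := by
  have : NeZero n := ⟨by omega⟩
  have hne : ({0} : Finset (Fin n)) ≠ univ := fun h => by
    have := congrArg Finset.card h
    simp at this
    omega
  rw [minCutVal_eq_sInf]
  exact Set.Nonempty.csInf_mem ⟨_, {0}, singleton_nonempty 0, hne, rfl⟩ (finite_cutValues w)

end Cuts

section Shores

variable {n : ℕ} [NeZero n]

theorem exists_shore_cutIndicator_eq {S : Finset (Fin n)} (hS : S.Nonempty) (hS' : S ≠ univ) :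
    ∃ T : Shore n, cutIndicator T.1 = cutIndicator S := by
  by_cases h0 : (0 : Fin n) ∈ S
  · have hSc : Sᶜ.Nonempty := nonempty_iff_ne_empty.mpr ((compl_eq_empty_iff S).not.mpr hS')
    exact ⟨⟨Sᶜ, hSc, by simpa using h0⟩, cutIndicator_compl S⟩
  · exact ⟨⟨S, hS, h0⟩, rfl⟩

theorem Shore.ne_univ (S : Shore n) : S.1 ≠ univ :=
  fun h => S.2.2 (h ▸ mem_univ 0)

theorem minCutVal_le_Mn_mulVec (w : EdgeSlot n → ℝ) (S : Shore n) :
    minCutVal n w ≤ (Mn n *ᵥ w) S := by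
  rw [show (Mn n *ᵥ w) S = cutIndicator S.1 ⬝ᵥ w from rfl, cutIndicator_dotProduct]
  exact minCutVal_le_cutWeight w S.2.1 S.ne_univ

theorem le_minCutVal_of_forall_shore (hn : 2 ≤ n) {w : EdgeSlot n → ℝ} {t : ℝ}
    (h : ∀ S : Shore n, t ≤ cutIndicator S.1 ⬝ᵥ w) : t ≤ minCutVal n w := by
  rw [minCutVal_eq_sInf]
  refine le_csInf ⟨_, minCutVal_mem_cutValues hn w⟩ ?_
  rintro _ ⟨S, hS, hS', rfl⟩
  obtain ⟨T, hT⟩ := exists_shore_cutIndicator_eq hS hS'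
  simpa [hT, cutIndicator_dotProduct] using h T

end Shores

section Certificates

variable {n : ℕ}

def IsMincutCertificate {κ : Type*} [Fintype κ] (A : Matrix κ (EdgeSlot n) ℝ)
    (w : EdgeSlot n → ℝ) : Prop :=
  ∀ w' : EdgeSlot n → ℝ, (∀ e, 0 ≤ w' e) → A *ᵥ w = A *ᵥ w' → minCutVal n w' = minCutVal n w

theorem exists_isMincutCertificate (w : EdgeSlot n → ℝ) :
    ∃ A : Matrix (Fin (mincutCert n w)) (EdgeSlot n) ℝ, IsMincutCertificate A w := by
  let e := Fintype.equivFin (EdgeSlot n)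
  have hid : IsMincutCertificate
      ((1 : Matrix (EdgeSlot n) (EdgeSlot n) ℝ).submatrix e.symm (Equiv.refl _)) w :=
    fun w' _ hw' => by
      rw [submatrix_mulVec_equiv, submatrix_mulVec_equiv, one_mulVec, one_mulVec] at hw'
      exact congrArg (minCutVal n) (e.symm.surjective.injective_comp_right hw').symm
  exact Nat.sInf_mem (s := {k | ∃ A : Matrix (Fin k) (EdgeSlot n) ℝ, IsMincutCertificate A w})
    ⟨_, _, hid⟩

theorem mincutCert_le_finrank_span (w : EdgeSlot n → ℝ) (s : Set (EdgeSlot n → ℝ))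
    (hs : ∀ w' : EdgeSlot n → ℝ, (∀ e, 0 ≤ w' e) → (∀ a ∈ s, a ⬝ᵥ w' = a ⬝ᵥ w) →
      minCutVal n w' = minCutVal n w) :
    mincutCert n w ≤ Module.finrank ℝ (Submodule.span ℝ s) := by
  let b := Module.finBasis ℝ (Submodule.span ℝ s)
  refine Nat.sInf_le (⟨Matrix.of fun i => (b i : EdgeSlot n → ℝ), fun w' hw' hbw =>
    hs w' hw' fun a ha => ?_⟩ : ∃ A, IsMincutCertificate A w)
  have hb (i) : (b i : EdgeSlot n → ℝ) ⬝ᵥ w' = b i ⬝ᵥ w := (congrFun hbw i).symm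
  have ha := congrArg Subtype.val (b.sum_repr ⟨a, Submodule.subset_span ha⟩)
  simp only [Submodule.coe_sum, Submodule.coe_smul] at ha
  rw [← ha]
  simp [sum_dotProduct, smul_dotProduct, hb]

theorem mincutCert_eq_zero_of_isEmpty [IsEmpty (EdgeSlot n)] (w : EdgeSlot n → ℝ) :
    mincutCert n w = 0 :=
  Nat.eq_zero_of_le_zero <| Nat.sInf_le (⟨0, fun w' _ _ => by rw [Subsingleton.elim w' w]⟩ :
    ∃ A : Matrix (Fin 0) (EdgeSlot n) ℝ, IsMincutCertificate A w)

theorem isEmpty_edgeSlot (hn : n < 2) : IsEmpty (EdgeSlot n) :=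
  ⟨fun e => by have := e.1.card_le_univ; simp [e.2] at this; omega⟩

end Certificates

section CutRank

variable {n : ℕ} [NeZero n]

theorem cutRank_le_rank {τ : ℝ} {w : EdgeSlot n → ℝ} {X : Matrix (Shore n) (EdgeSlot n) ℝ}
    (hX : ∀ S e, X S e ≤ Mn n S e) (hXw : ∀ S, τ ≤ (X *ᵥ w) S) : cutRank n τ w ≤ X.rank :=
  Nat.sInf_le ⟨X, hX, hXw, rfl⟩

theorem exists_rank_eq_cutRank (w : EdgeSlot n → ℝ) :
    ∃ X : Matrix (Shore n) (EdgeSlot n) ℝ, (∀ S e, X S e ≤ Mn n S e) ∧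
      (∀ S, minCutVal n w ≤ (X *ᵥ w) S) ∧ X.rank = cutRank n (minCutVal n w) w :=
  Nat.sInf_mem (s := {r | ∃ X : Matrix (Shore n) (EdgeSlot n) ℝ, (∀ S e, X S e ≤ Mn n S e) ∧
    (∀ S, minCutVal n w ≤ (X *ᵥ w) S) ∧ X.rank = r})
    ⟨_, Mn n, fun _ _ => le_rfl, minCutVal_le_Mn_mulVec w, rfl⟩

theorem cutRank_le_card_of_isMincutCertificate {κ : Type*} [Fintype κ]
    {A : Matrix κ (EdgeSlot n) ℝ} {w : EdgeSlot n → ℝ} (hA : IsMincutCertificate A w) :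
    cutRank n (minCutVal n w) w ≤ Fintype.card κ := by
  have hdual (S : Shore n) :
      ∃ y, y ᵥ* A ≤ cutIndicator S.1 ∧ minCutVal n w ≤ y ⬝ᵥ (A *ᵥ w) :=
    exists_vecMul_le_and_le_dotProduct A (A *ᵥ w) (cutIndicator_nonneg S.1) fun x hx hAx => by
      rw [cutIndicator_dotProduct, ← hA x hx hAx.symm]
      exact minCutVal_le_cutWeight x S.2.1 S.ne_univ
  choose y hyA hyw using hdual
  calc cutRank n (minCutVal n w) w ≤ (Matrix.of y * A).rank :=
        cutRank_le_rank (fun S e => hyA S e) fun S => by rw [← mulVec_mulVec]; exact hyw S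
    _ ≤ A.rank := rank_mul_le_right _ _
    _ ≤ Fintype.card κ := rank_le_card_height A

theorem mincutCert_le_rank_add_one (hn : 2 ≤ n) {w : EdgeSlot n → ℝ}
    {X : Matrix (Shore n) (EdgeSlot n) ℝ} (hX : ∀ S e, X S e ≤ Mn n S e)
    (hXw : ∀ S, minCutVal n w ≤ (X *ᵥ w) S) : mincutCert n w ≤ X.rank + 1 := by
  obtain ⟨S₁, hS₁, hS₁', hS₁w⟩ := minCutVal_mem_cutValues hn w
  calc mincutCert n w
      ≤ Module.finrank ℝ (Submodule.span ℝ (insert (cutIndicator S₁) (Set.range X.row))) :=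
        mincutCert_le_finrank_span w _ fun w' hw' hs => ?_
    _ ≤ X.rank + 1 := by
        rw [Submodule.span_insert, rank_eq_finrank_span_row, add_comm]
        refine (Submodule.finrank_add_le_finrank_add_finrank _ _).trans (Nat.add_le_add_right ?_ _)
        simpa using finrank_span_le_card ({cutIndicator S₁} : Set (EdgeSlot n → ℝ))
  apply le_antisymm
  · rw [← hS₁w, ← cutIndicator_dotProduct, ← hs _ (Set.mem_insert _ _), cutIndicator_dotProduct]
    exact minCutVal_le_cutWeight w' hS₁ hS₁'
  · refine le_minCutVal_of_forall_shore hn fun S => ?_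
    calc minCutVal n w ≤ X S ⬝ᵥ w := hXw S
      _ = X S ⬝ᵥ w' := (hs _ (Set.mem_insert_of_mem _ ⟨S, rfl⟩)).symm
      _ ≤ cutIndicator S.1 ⬝ᵥ w' := dotProduct_le_dotProduct_of_nonneg_right (hX S) hw'

end CutRank

theorem mincutCert_between_cutRank_general (n : ℕ) [NeZero n] (w : EdgeSlot n → ℝ) :
    cutRank n (minCutVal n w) w ≤ mincutCert n w ∧
      mincutCert n w ≤ cutRank n (minCutVal n w) w + 1 := by
  obtain ⟨A, hA⟩ := exists_isMincutCertificate w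
  refine ⟨by simpa using cutRank_le_card_of_isMincutCertificate hA, ?_⟩
  rcases lt_or_ge n 2 with hn | hn
  · have := isEmpty_edgeSlot hn
    rw [mincutCert_eq_zero_of_isEmpty]
    exact Nat.zero_le _
  · obtain ⟨X, hX, hXw, hXr⟩ := exists_rank_eq_cutRank w
    exact hXr ▸ mincutCert_le_rank_add_one hn hX hXw

/-- `λ(G)-cut-rank(G) ≤ mincut-cert(G) ≤ λ(G)-cut-rank(G) + 1`. -/
theorem mincutCert_between_cutRank (n : ℕ) [NeZero n] (w : EdgeSlot n → ℝ)
    (hw : ∀ e, 0 ≤ w e) :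
    cutRank n (minCutVal n w) w ≤ mincutCert n w ∧
      mincutCert n w ≤ cutRank n (minCutVal n w) w + 1 :=
  mincutCert_between_cutRank_general n w
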